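/- arXiv:2112.11717 — 2 statements merged into one kernel-verified Lean document; each statement's English description precedes it below -/
import Mathlib

section
/- Fix an integer k ≥ 1 and reals r > 1 and σ_v² > 0. Define, for Δ > 0, R(Δ) = (1/2)·log₂(1 + 12·σ_v²/Δ²) + (1/2)·log₂(2π/6) and R_s(Δ) = (k/2)·log₂(2πe·σ_v²) − k·log₂(r·Δ). Then R(Δ)/R_s(Δ) tends to 1/k as Δ tends to 0 from the right. -/
open Filter Real Topology

/-- The practical efficiency of the index-assignment based
multiple-description stabilizing codes asymptotically degenerates to that of the
repetition code, `1/k` (Lemma 6 of the paper). -/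
theorem practical_efficiency_tendsto (k : ℕ) (hk : 1 ≤ k) (r σv2 : ℝ)
    (hr : 1 < r) (hσv2 : 0 < σv2) :
    Filter.Tendsto
      (fun Δ : ℝ =>
        ((1 / 2) * Real.logb 2 (1 + 12 * σv2 / Δ ^ 2)
            + (1 / 2) * Real.logb 2 (2 * Real.pi / 6)) /
        (((k : ℝ) / 2) * Real.logb 2 (2 * Real.pi * Real.exp 1 * σv2)
            - (k : ℝ) * Real.logb 2 (r * Δ)))
      (nhdsWithin 0 (Set.Ioi 0)) (nhds (1 / (k : ℝ))) := by
  have hk0 : (0:ℝ) < k := by exact_mod_cast hk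
  set g : ℝ → ℝ := fun Δ => -Real.logb 2 Δ with hgdef
  set c₁ : ℝ := (1 / 2) * Real.logb 2 (2 * Real.pi / 6) with hc1
  set h : ℝ → ℝ := fun Δ => (1 / 2) * Real.logb 2 (Δ ^ 2 + 12 * σv2) + c₁ with hhdef
  set c : ℝ := ((k : ℝ) / 2) * Real.logb 2 (2 * Real.pi * Real.exp 1 * σv2)
      - (k : ℝ) * Real.logb 2 r with hcdef
  -- g tends to atTop
  have hg : Tendsto g (𝓝[>] (0:ℝ)) atTop := by
    rw [hgdef]
    simp only [Real.logb]
    rw [tendsto_neg_atBot_iff.symm]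
    simp only [neg_neg]
    exact Real.tendsto_log_nhdsGT_zero.atBot_div_const (Real.log_pos one_lt_two)
  -- h tends to a finite limit
  have hh : Tendsto h (𝓝[>] (0:ℝ))
      (𝓝 ((1 / 2) * Real.logb 2 ((0:ℝ) ^ 2 + 12 * σv2) + c₁)) := by
    apply Tendsto.mono_left _ nhdsWithin_le_nhds
    apply Tendsto.add_const
    apply Tendsto.const_mul
    exact ((Real.continuousAt_logb (by positivity)).comp (by fun_prop)).tendsto
  have h1 : Tendsto (fun Δ => 1 + h Δ / g Δ) (𝓝[>] (0:ℝ)) (𝓝 (1 + 0)) :=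
    tendsto_const_nhds.add (hh.div_atTop hg)
  have h2 : Tendsto (fun Δ => (k:ℝ) + c / g Δ) (𝓝[>] (0:ℝ)) (𝓝 ((k:ℝ) + 0)) :=
    tendsto_const_nhds.add (tendsto_const_nhds.div_atTop hg)
  have hdiv : Tendsto (fun Δ => (1 + h Δ / g Δ) / ((k:ℝ) + c / g Δ)) (𝓝[>] (0:ℝ))
      (𝓝 ((1 + 0) / ((k:ℝ) + 0))) := h1.div h2 (by positivity)
  rw [show ((1:ℝ) + 0) / ((k:ℝ) + 0) = 1 / (k:ℝ) by ring] at hdiv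
  refine hdiv.congr' ?_
  filter_upwards [Ioo_mem_nhdsGT_of_mem (by norm_num : (0:ℝ) ∈ Set.Ico (0:ℝ) 1)]
    with Δ hΔ
  obtain ⟨hΔ0, hΔ1⟩ := hΔ
  have hgpos : 0 < g Δ := by
    simp only [hgdef, neg_pos]
    exact Real.logb_neg one_lt_two hΔ0 hΔ1
  have hgne : g Δ ≠ 0 := ne_of_gt hgpos
  have hnum : 1 + h Δ / g Δ = (g Δ + h Δ) / g Δ := by field_simp
  have hden : (k:ℝ) + c / g Δ = ((k:ℝ) * g Δ + c) / g Δ := by field_simp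
  rw [hnum, hden, div_div_div_comm, div_self hgne, div_one]
  congr 1
  · -- numerator identity
    have : (1:ℝ) + 12 * σv2 / Δ ^ 2 = (Δ ^ 2 + 12 * σv2) / Δ ^ 2 := by
      field_simp
    rw [this, Real.logb_div (by positivity) (by positivity), hgdef, hhdef]
    have : Real.logb 2 (Δ ^ 2) = 2 * Real.logb 2 Δ := by
      rw [show Δ ^ 2 = Δ ^ (2:ℕ) from rfl, Real.logb_pow]
      norm_num
    rw [this]; ring
  · -- denominator identity
    rw [Real.logb_mul (by positivity) (ne_of_gt hΔ0), hcdef, hgdef]; ring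
end

section
/- Let Δ > 0, let (Ω, μ) be a probability space, let v : Ω → ℝ be a random variable, and let z : Ω → ℝ be a random variable independent of v whose law is the uniform probability measure on the interval [−Δ/2, Δ/2). Define the dithered quantizer output w = Δ·round((v + z)/Δ) − z, where round is rounding to the nearest integer (round x = ⌊x + 1/2⌋). Then the quantization error v − w is independent of v, and its law is the uniform probability measure on [−Δ/2, Δ/2). -/
open MeasureTheory ProbabilityTheory

lemma err_eq_toIcoMod {Δ : ℝ} (hΔ : 0 < Δ) (x : ℝ) :
    x - Δ * ((round (x / Δ) : ℤ) : ℝ) = toIcoMod hΔ (-(Δ / 2)) x := by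
  rw [toIcoMod, toIcoDiv_eq_floor, round_eq]
  have h : (x - -(Δ / 2)) / Δ = x / Δ + 1 / 2 := by
    rw [div_add_div _ _ hΔ.ne' two_ne_zero, div_eq_div_iff hΔ.ne' (by positivity)]
    ring
  rw [h, zsmul_eq_mul]
  ring

lemma meas_toIcoMod {Δ : ℝ} (hΔ : 0 < Δ) (a : ℝ) : Measurable (toIcoMod hΔ a) := by
  have h : toIcoMod hΔ a = fun x => x - ((⌊(x - a) / Δ⌋ : ℤ) : ℝ) * Δ := by
    funext x
    rw [toIcoMod, toIcoDiv_eq_floor, zsmul_eq_mul]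
  rw [h]
  exact measurable_id.sub
    ((measurable_from_top.comp (((measurable_id.sub_const a).div_const Δ).floor)).mul_const Δ)

lemma map_toIcoMod_add_restrict_of_mem {Δ : ℝ} (hΔ : 0 < Δ) (a t : ℝ)
    (ht0 : 0 ≤ t) (htΔ : t < Δ) :
    Measure.map (fun s => toIcoMod hΔ a (t + s)) (volume.restrict (Set.Ico a (a + Δ))) =
      volume.restrict (Set.Ico a (a + Δ)) := by
  have hf : Measurable (fun s => toIcoMod hΔ a (t + s)) :=
    (meas_toIcoMod hΔ a).comp (measurable_const.add measurable_id)
  ext A hA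
  rw [Measure.map_apply hf hA, Measure.restrict_apply (hf hA), Measure.restrict_apply hA]
  have hseteq : (fun s => toIcoMod hΔ a (t + s)) ⁻¹' A ∩ Set.Ico a (a + Δ) =
      ((· + t) ⁻¹' (A ∩ Set.Ico (a + t) (a + Δ))) ∪
      ((· + (t - Δ)) ⁻¹' (A ∩ Set.Ico a (a + t))) := by
    ext s
    simp only [Set.mem_inter_iff, Set.mem_preimage, Set.mem_union, Set.mem_Ico]
    constructor
    · rintro ⟨hfA, hs1, hs2⟩
      by_cases hc : t + s < a + Δ
      · left
        have he : toIcoMod hΔ a (t + s) = t + s :=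
          (toIcoMod_eq_self hΔ).mpr ⟨by linarith, hc⟩
        rw [he] at hfA
        exact ⟨by rwa [add_comm s t], by constructor <;> linarith⟩
      · right
        have he : toIcoMod hΔ a (t + s) = t + s - Δ := by
          rw [toIcoMod_eq_iff hΔ]
          exact ⟨⟨by linarith, by linarith⟩, 1, by rw [one_zsmul]; ring⟩
        rw [he] at hfA
        exact ⟨by rwa [show s + (t - Δ) = t + s - Δ by ring],
          by constructor <;> linarith⟩
    · rintro (⟨hA1, hI1, hI2⟩ | ⟨hA2, hI1, hI2⟩)
      · have he : toIcoMod hΔ a (t + s) = t + s :=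
          (toIcoMod_eq_self hΔ).mpr ⟨by linarith, by linarith⟩
        exact ⟨by rw [he, add_comm t s]; exact hA1, by constructor <;> linarith⟩
      · have he : toIcoMod hΔ a (t + s) = t + s - Δ := by
          rw [toIcoMod_eq_iff hΔ]
          exact ⟨⟨by linarith, by linarith⟩, 1, by rw [one_zsmul]; ring⟩
        refine ⟨?_, by constructor <;> linarith⟩
        rw [he, show t + s - Δ = s + (t - Δ) by ring]
        exact hA2
  rw [hseteq, measure_union ?disj ?m2]
  case disj =>
    rw [Set.disjoint_left]
    intro s hs1 hs2
    simp only [Set.mem_preimage, Set.mem_inter_iff, Set.mem_Ico] at hs1 hs2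
    linarith [hs1.2.2, hs2.2.1]
  case m2 =>
    exact (measurable_add_const (t - Δ)) (hA.inter measurableSet_Ico)
  rw [measure_preimage_add_right, measure_preimage_add_right, ← measure_union ?disj2 ?m3,
    ← Set.inter_union_distrib_left, Set.union_comm,
    Set.Ico_union_Ico_eq_Ico (by linarith : a ≤ a + t) (by linarith : a + t ≤ a + Δ)]
  case disj2 =>
    exact (Set.Ico_disjoint_Ico_same (a := a) (b := a + t) (c := a + Δ)).symm.mono
      Set.inter_subset_right Set.inter_subset_right
  case m3 =>
    exact hA.inter measurableSet_Ico

lemma map_toIcoMod_add_restrict {Δ : ℝ} (hΔ : 0 < Δ) (a t : ℝ) :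
    Measure.map (fun s => toIcoMod hΔ a (t + s)) (volume.restrict (Set.Ico a (a + Δ))) =
      volume.restrict (Set.Ico a (a + Δ)) := by
  have h : (fun s => toIcoMod hΔ a (t + s)) =
      fun s => toIcoMod hΔ a (toIcoMod hΔ 0 t + s) := by
    funext s
    have ht : t + s = (toIcoMod hΔ 0 t + s) + toIcoDiv hΔ 0 t • Δ := by
      have := toIcoMod_add_toIcoDiv_zsmul hΔ 0 t
      rw [zsmul_eq_mul] at this ⊢
      linarith
    rw [ht, toIcoMod_add_zsmul]
  rw [h]
  have hmem := toIcoMod_mem_Ico hΔ 0 t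
  rw [Set.mem_Ico, zero_add] at hmem
  exact map_toIcoMod_add_restrict_of_mem hΔ a _ hmem.1 hmem.2

lemma map_toIcoMod_add_nu {Δ : ℝ} (hΔ : 0 < Δ) (a t : ℝ) :
    Measure.map (fun s => toIcoMod hΔ a (t + s))
        ((ENNReal.ofReal Δ)⁻¹ • volume.restrict (Set.Ico a (a + Δ))) =
      (ENNReal.ofReal Δ)⁻¹ • volume.restrict (Set.Ico a (a + Δ)) := by
  rw [Measure.map_smul, map_toIcoMod_add_restrict hΔ a t]

/-- Subtractively dithered uniform scalar quantization: if the dither `z`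
is independent of `v` and uniformly distributed on `[-Δ/2, Δ/2)`, then the quantization
error `v - w`, where `w = Δ·round((v+z)/Δ) - z`, is independent of `v` and is itself
uniformly distributed on `[-Δ/2, Δ/2)`. -/
theorem dithered_quantizer_error
    {Ω : Type*} [MeasurableSpace Ω] (μ : Measure Ω) [IsProbabilityMeasure μ]
    (Δ : ℝ) (hΔ : 0 < Δ) (v z : Ω → ℝ) (hv : Measurable v) (hz : Measurable z)
    (hindep : IndepFun z v μ)
    (hlaw : Measure.map z μ =
      (ENNReal.ofReal Δ)⁻¹ • volume.restrict (Set.Ico (-(Δ / 2)) (Δ / 2))) :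
    IndepFun (fun ω => v ω - (Δ * ((round ((v ω + z ω) / Δ) : ℤ) : ℝ) - z ω)) v μ ∧
    Measure.map (fun ω => v ω - (Δ * ((round ((v ω + z ω) / Δ) : ℤ) : ℝ) - z ω)) μ =
      (ENNReal.ofReal Δ)⁻¹ • volume.restrict (Set.Ico (-(Δ / 2)) (Δ / 2)) := by
  have hIco : Set.Ico (-(Δ / 2)) (Δ / 2) = Set.Ico (-(Δ / 2)) (-(Δ / 2) + Δ) := by
    rw [show -(Δ / 2) + Δ = Δ / 2 by ring]
  rw [hIco] at hlaw ⊢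
  set a : ℝ := -(Δ / 2) with ha
  -- the error function
  have hfun : (fun ω => v ω - (Δ * ((round ((v ω + z ω) / Δ) : ℤ) : ℝ) - z ω)) =
      fun ω => toIcoMod hΔ a (v ω + z ω) := by
    funext ω
    have h := err_eq_toIcoMod hΔ (v ω + z ω)
    rw [← ha] at h
    linarith
  rw [hfun]
  set e : Ω → ℝ := fun ω => toIcoMod hΔ a (v ω + z ω) with he_def
  have he : Measurable e := (meas_toIcoMod hΔ a).comp (hv.add hz)
  -- key invariance of the dither law
  have hkey : ∀ x : ℝ, Measure.map (fun y => toIcoMod hΔ a (x + y)) (Measure.map z μ) =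
      Measure.map z μ := by
    intro x
    rw [hlaw]
    exact map_toIcoMod_add_nu hΔ a x
  -- probability instances
  have hvprob : IsProbabilityMeasure (Measure.map v μ) :=
    Measure.isProbabilityMeasure_map hv.aemeasurable
  have hzprob : IsProbabilityMeasure (Measure.map z μ) :=
    Measure.isProbabilityMeasure_map hz.aemeasurable
  -- joint law of (v, z)
  have hvz : Measure.map (fun ω => (v ω, z ω)) μ = (Measure.map v μ).prod (Measure.map z μ) :=
    (indepFun_iff_map_prod_eq_prod_map_map hv.aemeasurable hz.aemeasurable).mp hindep.symm
  -- joint law of (v, e)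
  set G : ℝ × ℝ → ℝ × ℝ := fun p => (p.1, toIcoMod hΔ a (p.1 + p.2)) with hG_def
  have hG : Measurable G :=
    measurable_fst.prodMk ((meas_toIcoMod hΔ a).comp (measurable_fst.add measurable_snd))
  have hjoint : Measure.map (fun ω => (v ω, e ω)) μ =
      (Measure.map v μ).prod (Measure.map z μ) := by
    have hcomp : (fun ω => (v ω, e ω)) = G ∘ (fun ω => (v ω, z ω)) := rfl
    rw [hcomp, ← Measure.map_map hG (hv.prodMk hz), hvz]
    refine (Measure.prod_eq fun s t hs ht => ?_).symm
    rw [Measure.map_apply hG (hs.prod ht), Measure.prod_apply (hG (hs.prod ht))]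
    have hfib : ∀ x : ℝ, Measure.map z μ (Prod.mk x ⁻¹' (G ⁻¹' s ×ˢ t)) =
        s.indicator (fun _ => Measure.map z μ t) x := by
      intro x
      by_cases hx : x ∈ s
      · have hpre : Prod.mk x ⁻¹' (G ⁻¹' s ×ˢ t) = (fun y => toIcoMod hΔ a (x + y)) ⁻¹' t := by
          ext y
          simp [hG_def, hx]
        have hm : Measurable (fun y => toIcoMod hΔ a (x + y)) :=
          (meas_toIcoMod hΔ a).comp (measurable_const.add measurable_id)
        rw [hpre, Set.indicator_of_mem hx, ← Measure.map_apply hm ht, hkey x]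
      · have hpre : Prod.mk x ⁻¹' (G ⁻¹' s ×ˢ t) = ∅ := by
          ext y
          simp [hG_def, hx]
        rw [hpre, Set.indicator_of_notMem hx, measure_empty]
    rw [lintegral_congr hfib, lintegral_indicator_const hs, mul_comm]
  -- law of e
  have hemarg : Measure.map e μ = Measure.map z μ := by
    have h1 := congrArg (Measure.map Prod.snd) hjoint
    rwa [Measure.map_map measurable_snd (hv.prodMk he), Measure.map_snd_prod,
      measure_univ, one_smul] at h1
  refine ⟨?_, hemarg.trans hlaw⟩
  have hve : IndepFun v e μ := by
    rw [indepFun_iff_map_prod_eq_prod_map_map hv.aemeasurable he.aemeasurable, hjoint, hemarg]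
  exact hve.symm
end
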